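/- arXiv:2409.10513 — 3 statements merged into one kernel-verified Lean document; each statement's English description precedes it below -/
import Mathlib

section
/- Let μ be a probability measure on a finite (or measurable) space Ω and let 𝔭 : Ω → [0,∞) be a probability density with respect to μ (i.e. ∫ 𝔭 dμ = 1). Then for every function 𝔣 : Ω → ℝ and every κ > 0, ∫ 𝔣·𝔭 dμ ≤ κ⁻¹·∫ 𝔭·log 𝔭 dμ + κ⁻¹·log ∫ e^{κ𝔣} dμ. -/
/-!
The Fenchel–Young inequality `x y ≤ x log x - x + e^y` for `x ≥ 0` (which is `1 + t ≤ e^t` with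
`t = y - log x`), applied at `x = p ω` and `y = κ f ω - log Z` with `Z = ∫ e^{κ f} dμ` and
integrated against `μ`, gives `κ ∫ f p dμ - log Z ≤ ∫ p log p dμ - ∫ p dμ + Z⁻¹ Z = ∫ p log p dμ`.
-/

open Real Finset

lemma Real.mul_le_mul_log_sub_add_exp {x : ℝ} (hx : 0 ≤ x) (y : ℝ) :
    x * y ≤ x * log x - x + exp y := by
  rcases hx.eq_or_lt with rfl | hx
  · simpa using (exp_pos y).le
  · have h := mul_le_mul_of_nonneg_left (add_one_le_exp (y - log x)) hx.le
    rw [exp_sub, exp_log hx, mul_div_cancel₀ _ hx.ne'] at h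
    linarith

theorem Finset.sum_mul_le_sum_mul_log_add_log_sum_exp {ι : Type*} (s : Finset ι)
    {μ p : ι → ℝ} (g : ι → ℝ) (hμ : ∀ i ∈ s, 0 ≤ μ i) (hp : ∀ i ∈ s, 0 ≤ p i)
    (hp1 : ∑ i ∈ s, p i * μ i = 1) :
    ∑ i ∈ s, g i * p i * μ i ≤
      ∑ i ∈ s, p i * log (p i) * μ i + log (∑ i ∈ s, exp (g i) * μ i) := by
  set Z := ∑ i ∈ s, exp (g i) * μ i with hZ_def
  have hZ : 0 < Z := by
    obtain ⟨i, hi, hpμ⟩ := exists_ne_zero_of_sum_ne_zero (hp1.trans_ne one_ne_zero)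
    have hμi : 0 < μ i := (hμ i hi).lt_of_ne (right_ne_zero_of_mul hpμ).symm
    exact sum_pos' (fun j hj => mul_nonneg (exp_pos _).le (hμ j hj))
      ⟨i, hi, mul_pos (exp_pos _) hμi⟩
  have key : ∑ i ∈ s, p i * (g i - log Z) * μ i ≤
      ∑ i ∈ s, (p i * log (p i) - p i + exp (g i) / Z) * μ i := by
    refine sum_le_sum fun i hi => mul_le_mul_of_nonneg_right ?_ (hμ i hi)
    simpa only [exp_sub, exp_log hZ] using mul_le_mul_log_sub_add_exp (hp i hi) (g i - log Z)
  have lhs : ∑ i ∈ s, p i * (g i - log Z) * μ i =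
      ∑ i ∈ s, g i * p i * μ i - log Z * ∑ i ∈ s, p i * μ i := by
    rw [mul_sum, ← sum_sub_distrib]
    exact sum_congr rfl fun i _ => by ring
  have rhs : ∑ i ∈ s, (p i * log (p i) - p i + exp (g i) / Z) * μ i =
      ∑ i ∈ s, p i * log (p i) * μ i - ∑ i ∈ s, p i * μ i + Z⁻¹ * Z := by
    rw [hZ_def, mul_sum, ← sum_sub_distrib, ← sum_add_distrib]
    exact sum_congr rfl fun i _ => by ring
  rw [lhs, rhs, hp1, inv_mul_cancel₀ hZ.ne'] at key
  linarith

theorem stmt_4_general {Ω : Type*} [Fintype Ω] (μ p f : Ω → ℝ) (κ : ℝ)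
    (hμ0 : ∀ ω, 0 ≤ μ ω)
    (hp0 : ∀ ω, 0 ≤ p ω) (hp1 : ∑ ω, p ω * μ ω = 1) (hκ : 0 < κ) :
    ∑ ω, f ω * p ω * μ ω ≤
      κ⁻¹ * ∑ ω, p ω * Real.log (p ω) * μ ω +
        κ⁻¹ * Real.log (∑ ω, Real.exp (κ * f ω) * μ ω) := by
  have h := univ.sum_mul_le_sum_mul_log_add_log_sum_exp (fun ω => κ * f ω)
    (fun ω _ => hμ0 ω) (fun ω _ => hp0 ω) hp1
  rw [← mul_add, le_inv_mul_iff₀ hκ, mul_sum]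
  simpa only [mul_assoc] using h

/-- Entropy inequality: if `μ` is a probability measure on a finite space `Ω` and `p` a
probability density with respect to `μ`, then for every `f : Ω → ℝ` and `κ > 0`,
`∫ f p dμ ≤ κ⁻¹ ∫ p log p dμ + κ⁻¹ log ∫ e^{κ f} dμ`. -/
theorem stmt_4 {Ω : Type*} [Fintype Ω] (μ p f : Ω → ℝ) (κ : ℝ)
    (hμ0 : ∀ ω, 0 ≤ μ ω) (hμ1 : ∑ ω, μ ω = 1)
    (hp0 : ∀ ω, 0 ≤ p ω) (hp1 : ∑ ω, p ω * μ ω = 1) (hκ : 0 < κ) :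
    ∑ ω, f ω * p ω * μ ω ≤
      κ⁻¹ * ∑ ω, p ω * Real.log (p ω) * μ ω +
        κ⁻¹ * Real.log (∑ ω, Real.exp (κ * f ω) * μ ω) :=
  stmt_4_general μ p f κ hμ0 hp0 hp1 hκ
end

section
/- Let {𝔣_i}_{i=1}^n be real-valued functions on {−1,+1}^L (for a finite set L) such that: (a) each 𝔣_i depends only on coordinates in a subset I_i ⊆ L, with the I_i pairwise disjoint; (b) each |𝔣_i| ≤ M for some constant M; and (c) for every admissible density σ, the conditional expectation of 𝔣_i given the total sum ∑_{x∈L} η_x vanishes, where η is uniform on the set {η : ∑_{x∈L} η_x = σ·|L|}. Then the partial sums S_m = 𝔣_1 + ⋯ + 𝔣_m form a martingale with respect to the filtration F_m generated by the coordinates in I_1 ∪ ⋯ ∪ I_m, under the uniform measure on {η ∈ {−1,+1}^L : ∑_{x∈L} η_x = σ·|L|}. -/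
/-!
Encode a function `g` of the configuration by its spin generating function
`∑_η g η • T ^ (totalSpin η)`, a Laurent polynomial whose `t`-th coefficient is the sum of `g`
over the level set of total spin `t`. For functions depending on complementary sets of sites the
generating function is multiplicative, and that of the constant `1` on `k` sites is
`(T + T⁻¹) ^ k ≠ 0`. So the mean-zero hypothesis on `f i`, which says that its generating function
over `L` vanishes, forces the generating function of `f i` viewed on the sites `I i` alone to
vanish: `f i` has mean zero under the canonical ensemble on `I i` for every density, which is what
conditioning on the sites outside `I i` produces. Multiplying by the indicator of an event of
`ℱ i`, which depends only on sites outside `I i`, then keeps the generating function zero, so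
`∫_S f i = 0` and the partial sums satisfy the martingale identity step by step.
-/

open MeasureTheory Finset LaurentPolynomial Function

namespace LaurentPolynomial

lemma T_sum {R ι : Type*} [CommSemiring R] (s : Finset ι) (f : ι → ℤ) :
    (T (∑ i ∈ s, f i) : R[T;T⁻¹]) = ∏ i ∈ s, T (f i) := by
  classical
  induction s using Finset.induction_on with
  | empty => simp [T_zero]
  | insert a s ha ih => rw [sum_insert ha, prod_insert ha, T_add, ih]

lemma T_one_add_T_neg_one_ne_zero {R : Type*} [Semiring R] [Nontrivial R] : (T 1 + T (-1) : R[T;T⁻¹]) ≠ 0 := by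
  intro h
  simpa using congrArg (fun p : R[T;T⁻¹] => p.coeff 1) h

end LaurentPolynomial

lemma PMF.integral_uniformOfFinset {Ω : Type*} [Fintype Ω] [MeasurableSpace Ω]
    [MeasurableSingletonClass Ω] (A : Finset Ω) (hA : A.Nonempty) (F : Ω → ℝ) :
    ∫ ω, F ω ∂(PMF.uniformOfFinset A hA).toMeasure = (#A : ℝ)⁻¹ * ∑ ω ∈ A, F ω := by
  classical
  simp [PMF.integral_eq_sum, PMF.uniformOfFinset_apply, apply_ite ENNReal.toReal, ite_mul, mul_sum]

section RestrictionFiltration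

variable {ι : Type*} {α : ι → Type*} {p : ι → Prop}

lemma dependsOn_mem_of_measurableSet_comap {S : Set (Π i, α i)}
    (hS : MeasurableSet[MeasurableSpace.comap (fun η (x : {x // p x}) => η x) ⊤] S) :
    DependsOn (· ∈ S) {x | p x} := by
  obtain ⟨u, -, rfl⟩ := hS
  intro η η' h
  simp only [Set.mem_preimage]
  congr! 2 with x
  exact h x x.2

lemma Function.DependsOn.measurable_comap {β : Type*} [MeasurableSpace β] [Nonempty β]
    {f : (Π i, α i) → β} (hf : DependsOn f {x | p x}) :
    Measurable[MeasurableSpace.comap (fun η (x : {x // p x}) => η x) ⊤] f := by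
  obtain ⟨g, rfl⟩ := dependsOn_iff_exists_comp.mp hf
  exact measurable_from_top.comp (comap_measurable _)

end RestrictionFiltration

namespace CanonicalEnsemble

variable {K R : Type*} [Fintype K] [CommRing R]

def totalSpin (η : K → Bool) : ℤ := ∑ x, if η x then 1 else -1

/-- The support of the canonical ensemble with total spin `s`. -/
def levelSet [DecidableEq K] (s : ℤ) : Finset (K → Bool) := univ.filter fun η => totalSpin η = s

lemma totalSpin_eq_add (q : K → Prop) [DecidablePred q] (η : K → Bool) :
    totalSpin η =
      totalSpin (fun x : {x // q x} => η x) + totalSpin (fun x : {x // ¬q x} => η x) :=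
  (Fintype.sum_subtype_add_sum_subtype q _).symm

variable [DecidableEq K]

noncomputable def spinPoly (g : (K → Bool) → R) : R[T;T⁻¹] := ∑ η, g η • T (totalSpin η)

lemma coeff_spinPoly (g : (K → Bool) → R) (s : ℤ) :
    (spinPoly g).coeff s = ∑ η ∈ levelSet s, g η := by
  simp [spinPoly, levelSet, AddMonoidAlgebra.coeff_sum, sum_filter]

lemma spinPoly_eq_zero_iff {g : (K → Bool) → R} :
    spinPoly g = 0 ↔ ∀ s, ∑ η ∈ levelSet s, g η = 0 := by
  simp only [LaurentPolynomial.ext_iff, coeff_spinPoly]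
  rfl

lemma spinPoly_one :
    spinPoly (fun _ : K → Bool => (1 : R)) = (T 1 + T (-1)) ^ Fintype.card K := by
  calc spinPoly (fun _ : K → Bool => (1 : R))
      = ∑ η : K → Bool, ∏ x, (T (if η x then 1 else -1) : R[T;T⁻¹]) := by
        simp only [spinPoly, totalSpin, one_smul, T_sum]
    _ = ∏ _x : K, ∑ b : Bool, (T (if b then 1 else -1) : R[T;T⁻¹]) := by
        rw [Fintype.prod_sum]
    _ = _ := by simp

lemma spinPoly_mul_restrict (q : K → Prop) [DecidablePred q] (g : ({x // q x} → Bool) → R)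
    (h : ({x // ¬q x} → Bool) → R) :
    spinPoly (fun η : K → Bool => g (fun x => η x) * h (fun x => η x)) =
      spinPoly g * spinPoly h := by
  rw [spinPoly, spinPoly, spinPoly, sum_mul_sum, ← Fintype.sum_prod_type',
    ← (Equiv.piEquivPiSubtypeProd q fun _ => Bool).sum_comp]
  refine Fintype.sum_congr _ _ fun η => ?_
  rw [totalSpin_eq_add q η, T_add, smul_mul_smul_comm]
  rfl

lemma spinPoly_mul_eq_zero [IsDomain R] {S : Set K} {f h : (K → Bool) → R}
    (hf : DependsOn f S) (hh : DependsOn h Sᶜ) (hf₀ : spinPoly f = 0) :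
    spinPoly (f * h) = 0 := by
  classical
  obtain ⟨g, rfl⟩ := dependsOn_iff_exists_comp.mp hf
  obtain ⟨k, rfl⟩ := dependsOn_iff_exists_comp.mp hh
  have hg : spinPoly g = 0 := by
    have hg₁ := spinPoly_mul_restrict (· ∈ S) g fun _ => 1
    rw [spinPoly_one] at hg₁
    simp only [mul_one] at hg₁
    change spinPoly (fun η : K → Bool => g fun x => η x) = 0 at hf₀
    rw [hg₁] at hf₀
    exact (mul_eq_zero.mp hf₀).resolve_right (pow_ne_zero _ T_one_add_T_neg_one_ne_zero)
  have hfac := spinPoly_mul_restrict (· ∈ S) g k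
  rw [hg, zero_mul] at hfac
  exact hfac

lemma setIntegral_uniformOfFinset_levelSet_eq_zero {s : ℤ} (hs : (levelSet s).Nonempty)
    {T : Set K} {f : (K → Bool) → ℝ} (hf : DependsOn f T) (hf₀ : ∀ t, ∑ η ∈ levelSet t, f η = 0)
    {S : Set (K → Bool)} (hS : DependsOn (· ∈ S) Tᶜ) :
    ∫ η in S, f η ∂(PMF.uniformOfFinset (levelSet s) hs).toMeasure = 0 := by
  have hind : DependsOn (S.indicator 1 : (K → Bool) → ℝ) Tᶜ := fun η η' h => by
    have hηη' : η ∈ S ↔ η' ∈ S := iff_of_eq (hS h)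
    by_cases hη : η ∈ S
    · rw [Set.indicator_of_mem hη, Set.indicator_of_mem (hηη'.mp hη), Pi.one_apply, Pi.one_apply]
    · rw [Set.indicator_of_notMem hη, Set.indicator_of_notMem (mt hηη'.mpr hη)]
  have hfS : S.indicator f = f * S.indicator 1 := funext fun η => by
    by_cases hη : η ∈ S <;> simp [hη]
  rw [← integral_indicator MeasurableSet.of_discrete, PMF.integral_uniformOfFinset,
    ← coeff_spinPoly, hfS, spinPoly_mul_eq_zero hf hind (spinPoly_eq_zero_iff.mpr hf₀)]
  simp

end CanonicalEnsemble

open CanonicalEnsemble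

theorem stmt_6_general {L : Type*} [Fintype L] [DecidableEq L]
    (n : ℕ) (f : ℕ → (L → Bool) → ℝ) (I : ℕ → Finset L) (s : ℤ)
    (hdisj : ∀ i j, i < n → j < n → i ≠ j → Disjoint (I i) (I j))
    (hdep : ∀ i, i < n → ∀ η η' : L → Bool,
      (∀ x ∈ I i, η x = η' x) → f i η = f i η')
    (hmean : ∀ i, i < n → ∀ s' : ℤ,
      ∑ η ∈ Finset.univ.filter
          (fun η : L → Bool => (∑ x : L, (if η x then (1 : ℤ) else -1)) = s'), f i η = 0)
    (A : Finset (L → Bool))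
    (hA : A = Finset.univ.filter
      (fun η : L → Bool => (∑ x : L, (if η x then (1 : ℤ) else -1)) = s))
    (hAne : A.Nonempty)
    (ℱ : Filtration ℕ (inferInstance : MeasurableSpace (L → Bool)))
    (hℱ : ∀ m : ℕ, ℱ m = MeasurableSpace.comap
      (fun (η : L → Bool) (x : {x : L // x ∈ (Finset.range m).biUnion I}) => η x.1) ⊤) :
    Martingale (fun m η => ∑ i ∈ Finset.range (min m n), f i η) ℱ
      ((PMF.uniformOfFinset A hAne).toMeasure) := by
  obtain rfl : A = levelSet s := hA
  have hsum_dep (m : ℕ) : DependsOn (fun η => ∑ i ∈ range (min m n), f i η)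
      {x | x ∈ (range m).biUnion I} := fun η η' h =>
    sum_congr rfl fun i hi => hdep i (lt_min_iff.mp (mem_range.mp hi)).2 η η' fun x hx =>
      h x (mem_biUnion.mpr ⟨i, mem_range.mpr (lt_min_iff.mp (mem_range.mp hi)).1, hx⟩)
  refine martingale_of_setIntegral_eq_succ (fun m => ?_) (fun _ => Integrable.of_finite)
    fun i S hS => ?_
  · rw [hℱ m]
    exact (hsum_dep m).measurable_comap.stronglyMeasurable
  rcases lt_or_ge i n with hi | hi
  · have hS_dep : DependsOn (· ∈ S) (↑(I i))ᶜ := by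
      rw [hℱ i] at hS
      refine (dependsOn_mem_of_measurableSet_comap hS).mono fun x hx hxi => ?_
      obtain ⟨j, hj, hxj⟩ := mem_biUnion.mp hx
      have hji := mem_range.mp hj
      exact disjoint_left.mp (hdisj j i (hji.trans hi) hi hji.ne) hxj hxi
    simp only [min_eq_left hi.le, min_eq_left hi.nat_succ_le, sum_range_succ]
    rw [integral_add Integrable.of_finite.integrableOn Integrable.of_finite.integrableOn,
      setIntegral_uniformOfFinset_levelSet_eq_zero hAne (hdep i hi) (hmean i hi) hS_dep, add_zero]
  · rw [min_eq_right hi, min_eq_right (hi.trans (Nat.le_succ i))]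

/-- Martingale property of partial sums under the canonical ensemble.  Configurations are
`η : L → Bool` (with `true ↦ +1`, `false ↦ -1`).  The functions `f i` (for `i < n`) have
pairwise disjoint supports `I i`, are bounded by `M`, and have zero mean on every level set of
the total spin.  Then the partial sums `S m = ∑_{i < min m n} f i` form a martingale, under
the uniform measure on the canonical ensemble `A = {η | ∑ η_x = s}`, with respect to the
filtration generated by the coordinates in `I 0 ∪ ⋯ ∪ I (m-1)`. -/
theorem stmt_6 {L : Type*} [Fintype L] [DecidableEq L]
    (n : ℕ) (f : ℕ → (L → Bool) → ℝ) (I : ℕ → Finset L) (M : ℝ) (s : ℤ)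
    (hdisj : ∀ i j, i < n → j < n → i ≠ j → Disjoint (I i) (I j))
    (hdep : ∀ i, i < n → ∀ η η' : L → Bool,
      (∀ x ∈ I i, η x = η' x) → f i η = f i η')
    (hbdd : ∀ i, i < n → ∀ η, |f i η| ≤ M)
    (hmean : ∀ i, i < n → ∀ s' : ℤ,
      ∑ η ∈ Finset.univ.filter
          (fun η : L → Bool => (∑ x : L, (if η x then (1 : ℤ) else -1)) = s'), f i η = 0)
    (A : Finset (L → Bool))
    (hA : A = Finset.univ.filter
      (fun η : L → Bool => (∑ x : L, (if η x then (1 : ℤ) else -1)) = s))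
    (hAne : A.Nonempty)
    (ℱ : Filtration ℕ (inferInstance : MeasurableSpace (L → Bool)))
    (hℱ : ∀ m : ℕ, ℱ m = MeasurableSpace.comap
      (fun (η : L → Bool) (x : {x : L // x ∈ (Finset.range m).biUnion I}) => η x.1) ⊤) :
    Martingale (fun m η => ∑ i ∈ Finset.range (min m n), f i η) ℱ
      ((PMF.uniformOfFinset A hAne).toMeasure) :=
  stmt_6_general n f I s hdisj hdep hmean A hA hAne ℱ hℱ
end

section
/- Let G be the generator of an ergodic continuous-time Markov chain on a finite state space Ω with invariant probability measure μ whose symmetric part has spectral gap λ₀ > 0. Then for every mean-zero function 𝔣 and every λ ≥ 0, the resolvent satisfies the sup-norm bound ‖(λ − G)^{−1}𝔣‖_∞ ≤ C·(1 + λ₀⁻¹)·(1 + log(1/μ_min))·‖𝔣‖_∞ for a universal constant C, where μ_min = min_{ω∈Ω} μ(ω). In particular the bound is uniform in λ ≥ 0. -/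
/-!
Uniformize the chain: for `c` large, `M = 1 + c⁻¹ G` is a stochastic matrix fixing `μ`, and the
resolvent equation reads `u = θ M u + (λ + c)⁻¹ f` with `θ = c / (λ + c) ≤ 1`; this is the
discrete analogue of splitting the resolvent integral. Iterating `N` times, each of the `N`
Neumann terms is at most `‖f‖_∞ / c` in sup norm, since `M` contracts `L^∞`. The remainder
`θ^N M^N u` is handled in `L²(μ)`: the spectral gap makes `M` contract mean-zero functions by the
factor `1 - gap / c`, and the energy identity gives `‖u‖₂ ≤ ‖f‖_∞ / gap`. With
`N ≈ (c / gap) log (1 / μ_min)` the contraction absorbs the factor `μ_min^{-1/2}` of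
`‖·‖_∞ ≤ μ_min^{-1/2} ‖·‖₂`, giving `‖u‖_∞ ≤ (2 + log (1 / μ_min)) ‖f‖_∞ / gap`.
-/

open Finset Matrix Real

variable {Ω : Type*} [Fintype Ω]

def weightedSqNorm (μ b : Ω → ℝ) : ℝ := ∑ x, μ x * b x ^ 2

structure IsMarkovGenerator (G : Matrix Ω Ω ℝ) : Prop where
  nonneg_of_ne : ∀ x y, x ≠ y → 0 ≤ G x y
  sum_row : ∀ x, ∑ y, G x y = 0

def HasSpectralGap (μ : Ω → ℝ) (G : Matrix Ω Ω ℝ) (gap : ℝ) : Prop :=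
  ∀ b : Ω → ℝ, μ ⬝ᵥ b = 0 → gap * weightedSqNorm μ b ≤ -∑ x, μ x * b x * (G *ᵥ b) x

lemma sq_sum_mul_le_sum_mul_sum_mul_sq {w : Ω → ℝ} (hw : ∀ x, 0 ≤ w x) (b : Ω → ℝ) :
    (∑ x, w x * b x) ^ 2 ≤ (∑ x, w x) * ∑ x, w x * b x ^ 2 :=
  sum_sq_le_sum_mul_sum_of_sq_le_mul _ (fun x _ => hw x)
    (fun x _ => mul_nonneg (hw x) (sq_nonneg _)) fun x _ => by rw [mul_pow, sq, mul_assoc]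

lemma abs_apply_le_of_weightedSqNorm_le {μ b : Ω → ℝ} {m K : ℝ} (hμ : ∀ x, m ≤ μ x)
    (hm : 0 < m) (hK : 0 ≤ K) (hb : weightedSqNorm μ b ≤ m * K ^ 2) (x : Ω) : |b x| ≤ K := by
  have hμx : m * b x ^ 2 ≤ μ x * b x ^ 2 := mul_le_mul_of_nonneg_right (hμ x) (sq_nonneg _)
  have hterm : μ x * b x ^ 2 ≤ weightedSqNorm μ b :=
    single_le_sum (fun y _ => mul_nonneg (hm.le.trans (hμ y)) (sq_nonneg (b y))) (mem_univ x)
  exact abs_le_of_sq_le_sq (le_of_mul_le_mul_left (by linarith) hm) hK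

lemma one_sub_pow_le_of_log_inv_le {t m : ℝ} {N : ℕ} (ht : t ≤ 1) (hm : 0 < m)
    (hN : log m⁻¹ ≤ N * t) : (1 - t) ^ N ≤ m :=
  calc (1 - t) ^ N ≤ exp (-t) ^ N :=
        pow_le_pow_left₀ (by linarith) (by linarith [add_one_le_exp (-t)]) N
    _ = exp (-(N * t)) := by rw [← exp_nat_mul]; ring_nf
    _ ≤ exp (-log m⁻¹) := exp_le_exp.mpr (by linarith)
    _ = m := by rw [log_inv, neg_neg, exp_log hm]

lemma log_inv_nonneg_of_le_weight {μ : Ω → ℝ} {m : ℝ} (hμm : ∀ x, m ≤ μ x) (hm : 0 < m)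
    (hμ1 : ∑ x, μ x = 1) (x : Ω) : 0 ≤ log m⁻¹ :=
  log_nonneg <| one_le_inv_iff₀.mpr ⟨hm, (hμm x).trans <|
    hμ1 ▸ single_le_sum (fun y _ => hm.le.trans (hμm y)) (mem_univ x)⟩

lemma eq_pow_smul_mulVec_add_sum {R : Type*} [CommRing R] [DecidableEq Ω]
    {A : Matrix Ω Ω R} {θ : R} {u g : Ω → R} (h : u = θ • A *ᵥ u + g) (N : ℕ) :
    u = θ ^ N • (A ^ N) *ᵥ u + ∑ n ∈ range N, θ ^ n • (A ^ n) *ᵥ g := by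
  induction N with
  | zero => simp
  | succ N ih =>
    conv_lhs => rw [ih, h]
    rw [mulVec_add, mulVec_smul, mulVec_mulVec, smul_add, smul_smul, ← pow_succ, ← pow_succ,
      sum_range_succ]
    abel

section Stochastic

variable [DecidableEq Ω] {P : Matrix Ω Ω ℝ}

lemma abs_mulVec_apply_le_of_mem_rowStochastic (hP : P ∈ rowStochastic ℝ Ω) {v : Ω → ℝ}
    {K : ℝ} (hv : ∀ y, |v y| ≤ K) (x : Ω) : |(P *ᵥ v) x| ≤ K :=
  calc |(P *ᵥ v) x| ≤ ∑ y, P x y * |v y| := by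
        refine (abs_sum_le_sum_abs _ _).trans_eq (sum_congr rfl fun y _ => ?_)
        rw [abs_mul, abs_of_nonneg (nonneg_of_mem_rowStochastic hP)]
    _ ≤ ∑ y, P x y * K :=
        sum_le_sum fun y _ => mul_le_mul_of_nonneg_left (hv y) (nonneg_of_mem_rowStochastic hP)
    _ = K := by rw [← sum_mul, sum_row_of_mem_rowStochastic hP, one_mul]

lemma abs_sum_pow_smul_mulVec_apply_le (hP : P ∈ rowStochastic ℝ Ω) {θ K : ℝ} (hθ0 : 0 ≤ θ)
    (hθ1 : θ ≤ 1) {v : Ω → ℝ} (hv : ∀ y, |v y| ≤ K) (N : ℕ) (x : Ω) :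
    |(∑ n ∈ range N, θ ^ n • (P ^ n) *ᵥ v) x| ≤ N * K := by
  rw [Finset.sum_apply]
  refine (abs_sum_le_sum_abs _ _).trans
    ((sum_le_sum (g := fun _ => K) fun n _ => ?_).trans_eq (by simp))
  rw [Pi.smul_apply, smul_eq_mul, abs_mul, abs_of_nonneg (pow_nonneg hθ0 n)]
  exact (mul_le_of_le_one_left (abs_nonneg _) (pow_le_one₀ hθ0 hθ1)).trans
    (abs_mulVec_apply_le_of_mem_rowStochastic (pow_mem hP n) hv x)

lemma weightedSqNorm_mulVec_le (hP : P ∈ rowStochastic ℝ Ω) {μ : Ω → ℝ} (hμ : ∀ x, 0 ≤ μ x)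
    (hinv : μ ᵥ* P = μ) (b : Ω → ℝ) : weightedSqNorm μ (P *ᵥ b) ≤ weightedSqNorm μ b :=
  calc weightedSqNorm μ (P *ᵥ b) ≤ μ ⬝ᵥ (P *ᵥ fun y => b y ^ 2) := by
        refine sum_le_sum fun x _ => mul_le_mul_of_nonneg_left ?_ (hμ x)
        simpa [mulVec, dotProduct, sum_row_of_mem_rowStochastic hP] using
          sq_sum_mul_le_sum_mul_sum_mul_sq (w := P x) (fun _ => nonneg_of_mem_rowStochastic hP) b
    _ = weightedSqNorm μ b := by rw [dotProduct_mulVec, hinv]; rfl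

end Stochastic

lemma weightedSqNorm_le_of_resolvent {μ : Ω → ℝ} {G : Matrix Ω Ω ℝ} {gap lam F : ℝ}
    {f u : Ω → ℝ} (hμ : ∀ x, 0 ≤ μ x) (hμ1 : ∑ x, μ x = 1) (hgap : HasSpectralGap μ G gap)
    (hgap0 : 0 < gap) (hlam : 0 ≤ lam) (hu0 : μ ⬝ᵥ u = 0)
    (hres : ∀ x, lam * u x - (G *ᵥ u) x = f x) (hf : ∀ x, |f x| ≤ F) :
    weightedSqNorm μ u ≤ (F / gap) ^ 2 := by
  set E := weightedSqNorm μ u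
  have hE0 : 0 ≤ E := sum_nonneg fun x _ => mul_nonneg (hμ x) (sq_nonneg _)
  have hdir : gap * E ≤ ∑ x, μ x * (u x * f x) := by
    have hform : -∑ x, μ x * u x * (G *ᵥ u) x = -(lam * E) + ∑ x, μ x * (u x * f x) := by
      simp only [E, weightedSqNorm, ← hres, mul_sum, ← sum_neg_distrib, ← sum_add_distrib]
      exact sum_congr rfl fun x _ => by ring
    nlinarith [hgap u hu0, mul_nonneg hlam hE0]
  have hcs : (∑ x, μ x * (u x * f x)) ^ 2 ≤ E * F ^ 2 :=
    calc (∑ x, μ x * (u x * f x)) ^ 2 ≤ 1 * ∑ x, μ x * (u x * f x) ^ 2 :=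
          hμ1 ▸ sq_sum_mul_le_sum_mul_sum_mul_sq hμ _
      _ ≤ E * F ^ 2 := by
          simp only [one_mul, E, weightedSqNorm, sum_mul]
          refine sum_le_sum fun x _ => ?_
          have hf2 : f x ^ 2 ≤ F ^ 2 := by
            rw [← sq_abs]; exact pow_le_pow_left₀ (abs_nonneg _) (hf x) 2
          rw [mul_pow, ← mul_assoc]
          exact mul_le_mul_of_nonneg_left hf2 (mul_nonneg (hμ x) (sq_nonneg _))
  rcases hE0.eq_or_lt with hE | hE
  · rw [← hE]; positivity
  have hsq : E * gap ^ 2 * E ≤ F ^ 2 * E := by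
    nlinarith [pow_le_pow_left₀ (mul_nonneg hgap0.le hE0) hdir 2]
  rw [div_pow, le_div_iff₀ (by positivity)]
  exact le_of_mul_le_mul_right hsq hE

section Generator

variable [DecidableEq Ω] {G : Matrix Ω Ω ℝ} {μ : Ω → ℝ} {c gap : ℝ}

noncomputable def uniformization (G : Matrix Ω Ω ℝ) (c : ℝ) : Matrix Ω Ω ℝ := 1 + c⁻¹ • G

lemma uniformization_mulVec_apply (b : Ω → ℝ) (x : Ω) :
    (uniformization G c *ᵥ b) x = b x + c⁻¹ * (G *ᵥ b) x := by
  simp [uniformization, add_mulVec, smul_mulVec]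

lemma IsMarkovGenerator.uniformization_mem_rowStochastic (hG : IsMarkovGenerator G) (hc : 0 < c)
    (hdiag : ∀ x, -G x x ≤ c) : uniformization G c ∈ rowStochastic ℝ Ω := by
  refine mem_rowStochastic_iff_sum.mpr ⟨fun x y => ?_, fun x => ?_⟩
  · rcases eq_or_ne x y with rfl | hxy
    · have : -1 ≤ c⁻¹ * G x x := by
        rw [← div_eq_inv_mul, le_div_iff₀ hc]; linarith [hdiag x]
      simp [uniformization]; linarith
    · simpa [uniformization, hxy] using mul_nonneg (inv_nonneg.mpr hc.le) (hG.nonneg_of_ne x y hxy)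
  · simp [uniformization, one_apply, sum_add_distrib, ← mul_sum, hG.sum_row x]

lemma vecMul_uniformization (hstat : μ ᵥ* G = 0) : μ ᵥ* uniformization G c = μ := by
  simp [uniformization, vecMul_add, vecMul_smul, hstat]

lemma dotProduct_uniformization_pow_mulVec (hstat : μ ᵥ* G = 0) (n : ℕ) (b : Ω → ℝ) :
    μ ⬝ᵥ (uniformization G c ^ n) *ᵥ b = μ ⬝ᵥ b := by
  induction n with
  | zero => simp
  | succ n ih => rw [pow_succ', ← mulVec_mulVec, dotProduct_mulVec, vecMul_uniformization hstat, ih]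

lemma weightedSqNorm_uniformization_mulVec_le (hG : IsMarkovGenerator G) (hμ : ∀ x, 0 ≤ μ x)
    (hstat : μ ᵥ* G = 0) (hc : 0 < c) (hdiag : ∀ x, -2 * G x x ≤ c) {b : Ω → ℝ}
    (hb : gap * weightedSqNorm μ b ≤ -∑ x, μ x * b x * (G *ᵥ b) x) :
    weightedSqNorm μ (uniformization G c *ᵥ b) ≤ (1 - gap / c) * weightedSqNorm μ b := by
  -- `uniformization G c` is the average of the identity and the stochastic `uniformization G (c/2)`
  have hhalf := weightedSqNorm_mulVec_le (hG.uniformization_mem_rowStochastic (half_pos hc)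
    fun x => by linarith [hdiag x]) hμ (vecMul_uniformization hstat) b
  have hexpand : weightedSqNorm μ (uniformization G c *ᵥ b) = weightedSqNorm μ b
      + c⁻¹ * ∑ x, μ x * b x * (G *ᵥ b) x
      + (weightedSqNorm μ (uniformization G (c / 2) *ᵥ b) - weightedSqNorm μ b) / 4 := by
    simp only [weightedSqNorm, uniformization_mulVec_apply, mul_sum, ← sum_sub_distrib, sum_div,
      ← sum_add_distrib]
    refine sum_congr rfl fun x _ => ?_
    field_simp
    ring
  have hdir : c⁻¹ * ∑ x, μ x * b x * (G *ᵥ b) x ≤ c⁻¹ * -(gap * weightedSqNorm μ b) :=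
    mul_le_mul_of_nonneg_left (by linarith) (inv_nonneg.mpr hc.le)
  have hrate : (1 - gap / c) * weightedSqNorm μ b
      = weightedSqNorm μ b + c⁻¹ * -(gap * weightedSqNorm μ b) := by ring
  linarith

lemma weightedSqNorm_uniformization_pow_mulVec_le (hG : IsMarkovGenerator G) (hμ : ∀ x, 0 ≤ μ x)
    (hstat : μ ᵥ* G = 0) (hgap : HasSpectralGap μ G gap) (hc : 0 < c) (hgc : gap ≤ c)
    (hdiag : ∀ x, -2 * G x x ≤ c) {b : Ω → ℝ} (hb : μ ⬝ᵥ b = 0) (n : ℕ) :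
    weightedSqNorm μ ((uniformization G c ^ n) *ᵥ b) ≤ (1 - gap / c) ^ n * weightedSqNorm μ b := by
  induction n with
  | zero => simp
  | succ n ih =>
    have hmean : μ ⬝ᵥ (uniformization G c ^ n) *ᵥ b = 0 := by
      rw [dotProduct_uniformization_pow_mulVec hstat, hb]
    rw [pow_succ', ← mulVec_mulVec, pow_succ', mul_assoc]
    exact (weightedSqNorm_uniformization_mulVec_le hG hμ hstat hc hdiag (hgap _ hmean)).trans
      (mul_le_mul_of_nonneg_left ih (sub_nonneg.mpr ((div_le_one hc).mpr hgc)))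

lemma eq_smul_uniformization_mulVec_add_of_resolvent {lam : ℝ} {f u : Ω → ℝ} (hc : 0 < c)
    (hlc : 0 < lam + c) (hres : ∀ x, lam * u x - (G *ᵥ u) x = f x) :
    u = (c / (lam + c)) • uniformization G c *ᵥ u + (lam + c)⁻¹ • f := by
  funext y
  simp only [Pi.add_apply, Pi.smul_apply, smul_eq_mul, uniformization_mulVec_apply]
  field_simp
  linarith [hres y]

lemma IsMarkovGenerator.abs_uniformization_pow_mulVec_apply_le (hG : IsMarkovGenerator G)
    {m : ℝ} (hμm : ∀ x, m ≤ μ x) (hm : 0 < m) (hstat : μ ᵥ* G = 0) (hgap : HasSpectralGap μ G gap)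
    (hc : 0 < c) (hgc : gap ≤ c) (hdiag : ∀ x, -2 * G x x ≤ c) {N : ℕ}
    (hN : log m⁻¹ ≤ N * (gap / c)) {b : Ω → ℝ} (hb : μ ⬝ᵥ b = 0) {K : ℝ} (hK : 0 ≤ K)
    (hbK : weightedSqNorm μ b ≤ K ^ 2) (x : Ω) : |(uniformization G c ^ N *ᵥ b) x| ≤ K := by
  have hμ : ∀ x, 0 ≤ μ x := fun x => hm.le.trans (hμm x)
  refine abs_apply_le_of_weightedSqNorm_le hμm hm hK ?_ x
  refine (weightedSqNorm_uniformization_pow_mulVec_le hG hμ hstat hgap hc hgc hdiag hb N).trans ?_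
  exact mul_le_mul (one_sub_pow_le_of_log_inv_le ((div_le_one hc).mpr hgc) hm hN) hbK
    (sum_nonneg fun y _ => mul_nonneg (hμ y) (sq_nonneg _)) hm.le

lemma IsMarkovGenerator.abs_apply_le_of_resolvent (hG : IsMarkovGenerator G) {m lam F : ℝ}
    {f u : Ω → ℝ} (hμm : ∀ x, m ≤ μ x) (hm : 0 < m) (hμ1 : ∑ x, μ x = 1) (hstat : μ ᵥ* G = 0)
    (hgap : HasSpectralGap μ G gap) (hgap0 : 0 < gap) (hlam : 0 ≤ lam) (hu0 : μ ⬝ᵥ u = 0)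
    (hres : ∀ x, lam * u x - (G *ᵥ u) x = f x) (hf : ∀ x, |f x| ≤ F) (x : Ω) :
    |u x| ≤ (2 + log m⁻¹) / gap * F := by
  have hF : 0 ≤ F := (abs_nonneg _).trans (hf x)
  have hL := log_inv_nonneg_of_le_weight hμm hm hμ1 x
  set c := gap + 2 * ∑ y, |G y y|
  have hdiag : ∀ y, -2 * G y y ≤ c := fun y => by
    linarith [neg_le_abs (G y y), single_le_sum (fun z _ => abs_nonneg (G z z)) (mem_univ y)]
  have hc : 0 < c := by positivity
  have hgc : gap ≤ c := le_add_of_nonneg_right (by positivity)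
  set M := uniformization G c
  have hM := hG.uniformization_mem_rowStochastic hc fun y => by
    linarith [hdiag y, neg_le_abs (G y y), abs_nonneg (G y y)]
  have hlc : 0 < lam + c := by positivity
  set θ := c / (lam + c)
  have hθ1 : θ ≤ 1 := (div_le_one hlc).mpr (by linarith)
  have hfix : u = θ • M *ᵥ u + (lam + c)⁻¹ • f :=
    eq_smul_uniformization_mulVec_add_of_resolvent hc hlc hres
  set N := ⌈c / gap * log m⁻¹⌉₊
  have hrem : |(M ^ N *ᵥ u) x| ≤ F / gap := by
    refine hG.abs_uniformization_pow_mulVec_apply_le hμm hm hstat hgap hc hgc hdiag ?_ hu0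
      (by positivity) (weightedSqNorm_le_of_resolvent (fun y => hm.le.trans (hμm y)) hμ1 hgap
        hgap0 hlam hu0 hres hf) x
    calc log m⁻¹ = c / gap * log m⁻¹ * (gap / c) := by field_simp
      _ ≤ N * (gap / c) := by gcongr; exact Nat.le_ceil _
  have hsum : |(∑ n ∈ range N, θ ^ n • (M ^ n) *ᵥ ((lam + c)⁻¹ • f)) x| ≤ N * (F / c) := by
    refine abs_sum_pow_smul_mulVec_apply_le hM (by positivity) hθ1 (fun y => ?_) N x
    rw [Pi.smul_apply, smul_eq_mul, abs_mul, abs_of_pos (inv_pos.mpr hlc), inv_mul_eq_div]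
    exact div_le_div₀ hF (hf y) hc (by linarith)
  have hN : (N : ℝ) * (F / c) ≤ (log m⁻¹ + 1) / gap * F :=
    calc (N : ℝ) * (F / c) ≤ (c / gap * log m⁻¹ + 1) * (F / c) := by
          gcongr; exact (Nat.ceil_lt_add_one (by positivity)).le
      _ = (log m⁻¹ / gap + 1 / c) * F := by field_simp
      _ ≤ (log m⁻¹ + 1) / gap * F := by rw [add_div]; gcongr
  calc |u x| ≤ |θ ^ N| * |(M ^ N *ᵥ u) x|
        + |(∑ n ∈ range N, θ ^ n • (M ^ n) *ᵥ ((lam + c)⁻¹ • f)) x| := by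
        conv_lhs => rw [eq_pow_smul_mulVec_add_sum hfix N]
        rw [Pi.add_apply, Pi.smul_apply, smul_eq_mul, ← abs_mul]
        exact abs_add_le _ _
    _ ≤ 1 * (F / gap) + (log m⁻¹ + 1) / gap * F := by
        gcongr
        · rw [abs_of_nonneg (by positivity)]; exact pow_le_one₀ (by positivity) hθ1
        · linarith
    _ = (2 + log m⁻¹) / gap * F := by ring

end Generator

/-- Sup-norm resolvent bound: there is a universal constant `C` such that for every ergodic
Markov generator `G` on a finite state space with invariant probability `μ` (with
`μ_min = min μ > 0`) whose symmetric part has spectral gap `gap₀ > 0` in `L²(μ)` on mean-zero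
functions, every mean-zero `f`, every `λ ≥ 0` and `u = (λ - G)⁻¹ f` mean-zero (i.e.
`λ u - G u = f` with `∫ u dμ = 0`), one has
`‖u‖_∞ ≤ C (1 + gap₀⁻¹)(1 + log (1/μ_min)) ‖f‖_∞`, uniformly in `λ ≥ 0`. -/
theorem stmt_10 : ∃ C : ℝ, 0 < C ∧
    ∀ (Ω : Type) (_ : Fintype Ω) (_ : Nonempty Ω) (μ : Ω → ℝ) (G : Ω → Ω → ℝ)
      (gap₀ lam : ℝ) (f u : Ω → ℝ),
      (∀ x, 0 < μ x) → (∑ x, μ x = 1) →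
      (∀ x y, x ≠ y → 0 ≤ G x y) →
      (∀ x, ∑ y, G x y = 0) →
      (∀ y, ∑ x, μ x * G x y = 0) →
      0 < gap₀ →
      (∀ b : Ω → ℝ, ∑ x, μ x * b x = 0 →
        gap₀ * ∑ x, μ x * b x ^ 2 ≤ -∑ x, μ x * b x * ∑ y, G x y * b y) →
      (∑ x, μ x * f x = 0) →
      0 ≤ lam →
      (∑ x, μ x * u x = 0) →
      (∀ x, lam * u x - (∑ y, G x y * u y) = f x) →
      (⨆ x, |u x|) ≤
        C * (1 + gap₀⁻¹) * (1 + Real.log (⨅ x, μ x)⁻¹) * ⨆ x, |f x| := by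
  refine ⟨2, two_pos, ?_⟩
  intro Ω _ _ μ G gap₀ lam f u hμ hμ1 hoff hrow hstat hgap0 hgap _ hlam hu0 hres
  classical
  obtain ⟨x₀, hx₀⟩ := exists_eq_ciInf_of_finite (f := μ)
  have hm : 0 < ⨅ x, μ x := hx₀ ▸ hμ x₀
  have hμm : ∀ x, ⨅ y, μ y ≤ μ x := ciInf_le (Set.finite_range _).bddBelow
  have hf : ∀ x, |f x| ≤ ⨆ y, |f y| := le_ciSup (Set.finite_range _).bddAbove
  have hL := log_inv_nonneg_of_le_weight hμm hm hμ1 x₀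
  refine ciSup_le fun x => ((IsMarkovGenerator.mk hoff hrow).abs_apply_le_of_resolvent hμm hm
    hμ1 (funext hstat) hgap hgap0 hlam hu0 hres hf x).trans ?_
  refine mul_le_mul_of_nonneg_right ?_ ((abs_nonneg _).trans (hf x))
  rw [div_eq_mul_inv]
  nlinarith [inv_pos.mpr hgap0]
end
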